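/- The direct product of complete multipartite graphs K_{a,…,a} (p₁ parts) and K_{b,…,b} (p₂ parts), where p₁, p₂ are distinct odd primes, has diameter 2. -/

import Mathlib

/-- The unitary Cayley graph of a commutative ring: vertices are ring elements,
with `x ~ y` iff `x ≠ y` and `x - y` is a unit. -/
def unitaryCayley (R : Type*) [CommRing R] : SimpleGraph R where
  Adj x y := x ≠ y ∧ IsUnit (x - y)
  symm := ⟨by
    rintro x y ⟨hne, hu⟩
    exact ⟨hne.symm, by simpa [neg_sub] using hu.neg⟩⟩
  loopless := ⟨by rintro x ⟨h, -⟩; exact h rfl⟩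

/-- A packing `k`-coloring: every vertex gets a color in `{1, …, k}`, and any two
distinct vertices with the same color `i` are at distance greater than `i`
(`edist` equals `⊤` for unreachable pairs, which counts as distance greater than `i`). -/
def SimpleGraph.IsPackingColoring {V : Type*} (G : SimpleGraph V) (k : ℕ) (c : V → ℕ) : Prop :=
  (∀ v, 1 ≤ c v ∧ c v ≤ k) ∧
    ∀ u v, u ≠ v → c u = c v → (c u : ℕ∞) < G.edist u v

/-- The packing chromatic number: the least `k` admitting a packing `k`-coloring. -/
noncomputable def SimpleGraph.packingChromaticNumber {V : Type*} (G : SimpleGraph V) : ℕ :=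
  sInf {k | ∃ c : V → ℕ, G.IsPackingColoring k c}

/-- The independence number: the largest cardinality of a set of pairwise
nonadjacent vertices. -/
noncomputable def SimpleGraph.indepNum' {V : Type*} (G : SimpleGraph V) : ℕ :=
  sSup {n | ∃ s : Finset V, (∀ u ∈ s, ∀ v ∈ s, u ≠ v → ¬ G.Adj u v) ∧ s.card = n}

/-- The tensor (direct, categorical) product of two simple graphs. -/
def tensorProd {V W : Type*} (G : SimpleGraph V) (H : SimpleGraph W) :
    SimpleGraph (V × W) where
  Adj a b := G.Adj a.1 b.1 ∧ H.Adj a.2 b.2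
  symm := ⟨fun _ _ ⟨h1, h2⟩ => ⟨h1.symm, h2.symm⟩⟩
  loopless := ⟨fun a h => G.loopless.irrefl a.1 h.1⟩

/-- The tensor (direct, categorical) product of a family of simple graphs. -/
def tensorPi {ι : Type*} [Nonempty ι] {V : ι → Type*} (G : ∀ i, SimpleGraph (V i)) :
    SimpleGraph (∀ i, V i) where
  Adj a b := ∀ i, (G i).Adj (a i) (b i)
  symm := ⟨fun _ _ h i => (h i).symm⟩
  loopless := ⟨fun a h => (G (Classical.arbitrary ι)).loopless.irrefl _ (h _)⟩

/-!
Two vertices of a complete multipartite graph with at least three parts always have a common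
neighbour: any vertex in a third part. Common neighbours of the factors pair up to common
neighbours in the direct product, so its diameter is at most 2. It is exactly 2 because two
vertices sharing their first coordinate are never adjacent, the first factor being loopless.
-/

namespace SimpleGraph

variable {α : Type*} {G : SimpleGraph α}

lemma ediam_eq_two_of_commonNeighbors_nonempty (h : ∀ u v, (G.commonNeighbors u v).Nonempty)
    {u v : α} (huv : u ≠ v) (hadj : ¬ G.Adj u v) : G.ediam = 2 := by
  refine le_antisymm (ediam_le_of_edist_le fun x y ↦ not_lt.mp fun hxy ↦ ?_) ?_
  · exact (h x y).ne_empty (two_lt_edist_iff.mp hxy).2.2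
  · exact (edist_eq_two_iff.mpr ⟨huv, hadj, h u v⟩).ge.trans edist_le_ediam

lemma completeMultipartiteGraph_commonNeighbors_nonempty {ι : Type*} {V : ι → Type*}
    [∀ i, Nonempty (V i)] (hι : 3 ≤ ENat.card ι) (u v : Σ i, V i) :
    ((completeMultipartiteGraph V).commonNeighbors u v).Nonempty := by
  obtain ⟨k, hku, hkv⟩ := ENat.exists_ne_ne_of_three_le hι u.1 v.1
  exact ⟨⟨k, Classical.arbitrary _⟩, hku.symm, hkv.symm⟩

end SimpleGraph

section tensorProd

variable {V W : Type*} {G : SimpleGraph V} {H : SimpleGraph W}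

lemma tensorProd_commonNeighbors_nonempty (hG : ∀ x y, (G.commonNeighbors x y).Nonempty)
    (hH : ∀ x y, (H.commonNeighbors x y).Nonempty) (u v : V × W) :
    ((tensorProd G H).commonNeighbors u v).Nonempty := by
  obtain ⟨x, hxu, hxv⟩ := hG u.1 v.1
  obtain ⟨y, hyu, hyv⟩ := hH u.2 v.2
  exact ⟨(x, y), ⟨hxu, hyu⟩, ⟨hxv, hyv⟩⟩

lemma ediam_tensorProd_eq_two (hG : ∀ x y, (G.commonNeighbors x y).Nonempty)
    (hH : ∀ x y, (H.commonNeighbors x y).Nonempty) (x : V) {y₁ y₂ : W} (hy : y₁ ≠ y₂) :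
    (tensorProd G H).ediam = 2 :=
  SimpleGraph.ediam_eq_two_of_commonNeighbors_nonempty (tensorProd_commonNeighbors_nonempty hG hH)
    (u := (x, y₁)) (v := (x, y₂)) (by simp [hy]) fun h ↦ h.1.ne rfl

end tensorProd

theorem stmt19_general (p₁ p₂ a b : ℕ) (hp₁ : p₁.Prime) (hp₂ : p₂.Prime)
    (ho₁ : Odd p₁) (ho₂ : Odd p₂) (ha : 0 < a) (hb : 0 < b) :
    (tensorProd (SimpleGraph.completeMultipartiteGraph (fun _ : Fin p₁ => Fin a))
        (SimpleGraph.completeMultipartiteGraph (fun _ : Fin p₂ => Fin b))).Connected ∧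
    (tensorProd (SimpleGraph.completeMultipartiteGraph (fun _ : Fin p₁ => Fin a))
        (SimpleGraph.completeMultipartiteGraph (fun _ : Fin p₂ => Fin b))).diam = 2 := by
  have three_le {p : ℕ} (hp : p.Prime) (ho : Odd p) : 3 ≤ ENat.card (Fin p) := by
    have := hp.two_le
    obtain ⟨k, rfl⟩ := ho
    simp only [ENat.card_eq_coe_fintype_card, Fintype.card_fin]
    exact_mod_cast (by omega : 3 ≤ 2 * k + 1)
  have : NeZero a := ⟨ha.ne'⟩
  have : NeZero b := ⟨hb.ne'⟩
  have : NeZero p₁ := ⟨hp₁.ne_zero⟩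
  have : NeZero p₂ := ⟨hp₂.ne_zero⟩
  have hw : (⟨⟨0, hp₂.pos⟩, 0⟩ : Σ _ : Fin p₂, Fin b) ≠ ⟨⟨1, hp₂.one_lt⟩, 0⟩ := by simp
  have hediam := ediam_tensorProd_eq_two
    (SimpleGraph.completeMultipartiteGraph_commonNeighbors_nonempty (three_le hp₁ ho₁))
    (SimpleGraph.completeMultipartiteGraph_commonNeighbors_nonempty (three_le hp₂ ho₂))
    (⟨0, 0⟩ : Σ _ : Fin p₁, Fin a) hw
  refine ⟨SimpleGraph.connected_of_ediam_ne_top (by simp [hediam]), ?_⟩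
  rw [SimpleGraph.diam, hediam]
  rfl

theorem stmt19 (p₁ p₂ a b : ℕ) (hp₁ : p₁.Prime) (hp₂ : p₂.Prime)
    (ho₁ : Odd p₁) (ho₂ : Odd p₂) (hne : p₁ ≠ p₂) (ha : 0 < a) (hb : 0 < b) :
    (tensorProd (SimpleGraph.completeMultipartiteGraph (fun _ : Fin p₁ => Fin a))
        (SimpleGraph.completeMultipartiteGraph (fun _ : Fin p₂ => Fin b))).Connected ∧
    (tensorProd (SimpleGraph.completeMultipartiteGraph (fun _ : Fin p₁ => Fin a))
        (SimpleGraph.completeMultipartiteGraph (fun _ : Fin p₂ => Fin b))).diam = 2 :=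
  stmt19_general p₁ p₂ a b hp₁ hp₂ ho₁ ho₂ ha hb
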